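/- arXiv:math/0209045 — 5 statements merged into one kernel-verified Lean document; each statement's English description precedes it below -/
import Mathlib

section
/- If G is a connected finite simple graph and ab is an edge of G, then the pivot G^{ab} is connected. -/
/-- The pair `x, y` lies in different classes among (neighbors of `a` only,
neighbors of `b` only, neighbors of both), with both distinct from `a` and `b`. -/
def togglePair {V : Type} (G : SimpleGraph V) (a b x y : V) : Prop :=
  (x ≠ a ∧ x ≠ b ∧ y ≠ a ∧ y ≠ b) ∧
  (G.Adj a x ∨ G.Adj b x) ∧ (G.Adj a y ∨ G.Adj b y) ∧
  ¬((G.Adj a x ↔ G.Adj a y) ∧ (G.Adj b x ↔ G.Adj b y))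

lemma togglePair_comm {V : Type} (G : SimpleGraph V) (a b x y : V) :
    togglePair G a b x y ↔ togglePair G a b y x := by
  unfold togglePair; tauto

/-- The pivot `G^{ab}`: toggle the adjacency of every pair of vertices (distinct
from `a`, `b`) lying in different classes among (neighbors of `a` only,
neighbors of `b` only, neighbors of both); all other adjacencies unchanged. -/
def pivot {V : Type} (G : SimpleGraph V) (a b : V) : SimpleGraph V where
  Adj x y := (togglePair G a b x y ∧ x ≠ y ∧ ¬ G.Adj x y) ∨
    (¬ togglePair G a b x y ∧ G.Adj x y)
  symm := by
    constructor
    intro x y h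
    rcases h with ⟨ht, hxy, hna⟩ | ⟨ht, ha⟩
    · exact Or.inl ⟨(togglePair_comm G a b x y).mp ht, hxy.symm,
        fun h => hna h.symm⟩
    · exact Or.inr ⟨fun h => ht ((togglePair_comm G a b y x).mp h), ha.symm⟩
  loopless := by
    constructor
    intro x h
    rcases h with ⟨_, hxy, _⟩ | ⟨_, ha⟩
    · exact hxy rfl
    · exact G.irrefl ha

lemma pivot_adj_touch {V : Type} (G : SimpleGraph V) (a b x y : V)
    (h : x = a ∨ x = b ∨ y = a ∨ y = b) :
    (pivot G a b).Adj x y ↔ G.Adj x y := by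
  have ht : ¬ togglePair G a b x y := by
    rintro ⟨⟨h1, h2, h3, h4⟩, -⟩
    rcases h with h | h | h | h <;> [exact h1 h; exact h2 h; exact h3 h; exact h4 h]
  constructor
  · rintro (⟨h', -⟩ | ⟨-, h'⟩)
    · exact absurd h' ht
    · exact h'
  · exact fun h' => Or.inr ⟨ht, h'⟩

lemma pivot_reach_of_adj {V : Type} (G : SimpleGraph V) (a b x y : V)
    (hab : G.Adj a b) (h : G.Adj x y) : (pivot G a b).Reachable x y := by
  by_cases tp : togglePair G a b x y
  · obtain ⟨-, hx, hy, -⟩ := tp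
    have hba : G.Adj b a := hab.symm
    have hreach : ∀ z : V, G.Adj a z ∨ G.Adj b z → (pivot G a b).Reachable z a := by
      intro z hz
      rcases hz with hz | hz
      · exact ((pivot_adj_touch G a b a z (Or.inl rfl)).mpr hz).symm.reachable
      · exact (((pivot_adj_touch G a b b z (Or.inr (Or.inl rfl))).mpr hz).symm.reachable).trans
          ((pivot_adj_touch G a b b a (Or.inr (Or.inl rfl))).mpr hba).reachable
    exact (hreach x hx).trans (hreach y hy).symm
  · exact (SimpleGraph.Adj.reachable (Or.inr ⟨tp, h⟩))

theorem pivot_connected {V : Type} (G : SimpleGraph V) (a b : V)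
    (hab : G.Adj a b) (hG : G.Connected) : (pivot G a b).Connected := by
  rw [SimpleGraph.connected_iff] at hG ⊢
  refine ⟨fun u v => ?_, hG.2⟩
  obtain ⟨w⟩ := hG.1 u v
  induction w with
  | nil => exact SimpleGraph.Reachable.refl _
  | cons h p ih => exact (pivot_reach_of_adj G a b _ _ hab h).trans ih
end

section
/- There exists a unique function q from finite simple graphs to Z[x], invariant under graph isomorphism, satisfying: q(G) = q(G - a) + q(G^{ab} - b) whenever ab is an edge of G, and q(E_n) = x^n for the edgeless graph E_n on n vertices. -/
/-- Deletion of the vertex `a` from `G`. -/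
def delVert {V : Type} (G : SimpleGraph V) (a : V) : SimpleGraph {v : V // v ≠ a} :=
  G.comap (fun v => v.1)

/-- `q` is an interlace polynomial map: invariant under graph isomorphism,
satisfying the pivot-deletion recursion `q(G) = q(G-a) + q(G^{ab}-b)` for every
edge `ab`, and equal to `x^n` on the edgeless graph on `n` vertices. -/
def IsInterlacePoly
    (q : ∀ (V : Type) [Fintype V] [DecidableEq V], SimpleGraph V → Polynomial ℤ) : Prop :=
  (∀ (V W : Type) [Fintype V] [DecidableEq V] [Fintype W] [DecidableEq W]
      (G : SimpleGraph V) (H : SimpleGraph W), Nonempty (G ≃g H) → q V G = q W H) ∧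
  (∀ (V : Type) [Fintype V] [DecidableEq V] (G : SimpleGraph V) (a b : V), G.Adj a b →
      q V G = q {v : V // v ≠ a} (delVert G a) +
        q {v : V // v ≠ b} (delVert (pivot G a b) b)) ∧
  (∀ (V : Type) [Fintype V] [DecidableEq V],
      q V (⊥ : SimpleGraph V) = Polynomial.X ^ (Fintype.card V))


open Matrix Finset Polynomial

namespace InterlaceAux

noncomputable section
open Classical

variable {V W : Type} [Fintype V] [DecidableEq V] [Fintype W] [DecidableEq W]

def eadj {V : Type} (G : SimpleGraph V) (x y : V) : ZMod 2 := if G.Adj x y then 1 else 0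

lemma eadj_symm {V : Type} (G : SimpleGraph V) (x y : V) : eadj G x y = eadj G y x := by
  unfold eadj; by_cases h : G.Adj x y
  · rw [if_pos h, if_pos h.symm]
  · rw [if_neg h, if_neg fun h' => h h'.symm]

lemma eadj_self {V : Type} (G : SimpleGraph V) (x : V) : eadj G x x = 0 := by
  simp [eadj]

/-- pivot doesn't change adjacencies involving a or b -/
lemma pivot_adj_of_mem {V : Type} (G : SimpleGraph V) (a b x y : V)
    (h : x = a ∨ x = b ∨ y = a ∨ y = b) : (pivot G a b).Adj x y ↔ G.Adj x y := by
  have ht : ¬ togglePair G a b x y := by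
    rintro ⟨⟨h1, h2, h3, h4⟩, -⟩
    rcases h with rfl | rfl | rfl | rfl <;> simp_all
  constructor
  · rintro (⟨ht', -⟩ | ⟨-, h'⟩); · exact absurd ht' ht
    · exact h'
  · intro h'; exact Or.inr ⟨ht, h'⟩

lemma eadj_pivot_of_mem {V : Type} (G : SimpleGraph V) (a b x y : V)
    (h : x = a ∨ x = b ∨ y = a ∨ y = b) : eadj (pivot G a b) x y = eadj G x y := by
  unfold eadj
  exact if_congr (pivot_adj_of_mem G a b x y h) rfl rfl

lemma toggle_eadj {V : Type} (G : SimpleGraph V) {a b x y : V}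
    (hxa : x ≠ a) (hxb : x ≠ b) (hya : y ≠ a) (hyb : y ≠ b) :
    (if togglePair G a b x y then (1 : ZMod 2) else 0) =
      eadj G a x * eadj G b y + eadj G b x * eadj G a y := by
  unfold togglePair eadj
  by_cases p : G.Adj a x <;> by_cases q : G.Adj b x <;>
    by_cases r : G.Adj a y <;> by_cases s : G.Adj b y <;>
    simp [p, q, r, s, hxa, hxb, hya, hyb] <;> decide

lemma eadj_pivot {V : Type} (G : SimpleGraph V) {a b x y : V}
    (hxa : x ≠ a) (hxb : x ≠ b) (hya : y ≠ a) (hyb : y ≠ b) (hxy : x ≠ y) :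
    eadj (pivot G a b) x y =
      eadj G x y + (eadj G a x * eadj G b y + eadj G b x * eadj G a y) := by
  rw [← toggle_eadj G hxa hxb hya hyb]
  unfold eadj pivot
  by_cases t : togglePair G a b x y <;> by_cases h : G.Adj x y <;>
    simp [t, h, hxy] <;> decide

variable {V W : Type} [Fintype V] [DecidableEq V] [Fintype W] [DecidableEq W]

def subMat (G : SimpleGraph V) (S : Finset V) : Matrix S S (ZMod 2) :=
  Matrix.of fun i j => eadj G i.1 j.1

lemma subMat_rank_le (G : SimpleGraph V) (S : Finset V) : (subMat G S).rank ≤ S.card := by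
  simpa [Fintype.card_coe] using (subMat G S).rank_le_card_width

def nul (G : SimpleGraph V) (S : Finset V) : ℕ := S.card - (subMat G S).rank

def qf (V : Type) [Fintype V] [DecidableEq V] (G : SimpleGraph V) : Polynomial ℤ :=
  ∑ S : Finset V, (X - 1) ^ nul G S

lemma qf_bot : qf V (⊥ : SimpleGraph V) = X ^ (Fintype.card V) := by
  have hsub : ∀ S : Finset V, subMat (⊥ : SimpleGraph V) S = 0 := by
    intro S; ext i j; simp [subMat, eadj]
  have hnul : ∀ S : Finset V, nul (⊥ : SimpleGraph V) S = S.card := by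
    intro S; rw [nul, hsub, Matrix.rank_zero, Nat.sub_zero]
  calc qf V (⊥ : SimpleGraph V) = ∑ S ∈ (univ : Finset V).powerset, (X - 1 : Polynomial ℤ) ^ S.card * 1 ^ ((univ : Finset V).card - S.card) := by
        rw [qf, Finset.powerset_univ]
        exact Finset.sum_congr rfl fun S _ => by rw [hnul, one_pow, mul_one]
      _ = ((X - 1) + 1) ^ (univ : Finset V).card := Finset.sum_pow_mul_eq_add_pow _ _ _
      _ = X ^ (Fintype.card V) := by rw [sub_add_cancel, Finset.card_univ]

/-- nul is invariant under graph isomorphisms -/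
lemma nul_map (G : SimpleGraph V) (H : SimpleGraph W) (e : G ≃g H) (S : Finset V) :
    nul H (S.image e) = nul G S := by
  have hcard : (S.image e).card = S.card := Finset.card_image_of_injective _ (e.toEquiv.injective)
  have me : ∀ x : V, x ∈ S ↔ e x ∈ S.image e := by
    intro x
    constructor
    · intro hx; exact Finset.mem_image_of_mem _ hx
    · intro hx
      rcases Finset.mem_image.mp hx with ⟨y, hy, hxy⟩
      rwa [← e.toEquiv.injective hxy]
  let ee : {x // x ∈ S} ≃ {y // y ∈ S.image e} := e.toEquiv.subtypeEquiv me
  have hmat : subMat G S = (subMat H (S.image e)).submatrix ee ee := by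
    ext i j
    simp only [subMat, Matrix.submatrix_apply, Matrix.of_apply]
    unfold eadj
    exact (if_congr (e.map_adj_iff).symm rfl rfl)
  rw [nul, nul, hcard, hmat, Matrix.rank_submatrix]

lemma qf_iso (G : SimpleGraph V) (H : SimpleGraph W) (e : G ≃g H) : qf V G = qf W H := by
  rw [qf, qf]
  refine Fintype.sum_equiv (e.toEquiv.finsetCongr) _ _ ?_
  intro S
  rw [Equiv.finsetCongr_apply, Finset.map_eq_image]
  rw [show (S.image ⇑(e.toEquiv.toEmbedding)) = S.image ⇑e from rfl, nul_map G H e S]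
lemma eadj_delVert (G : SimpleGraph V) (a : V) (u v : {v : V // v ≠ a}) :
    eadj (delVert G a) u v = eadj G u.1 v.1 := by
  unfold eadj
  exact if_congr Iff.rfl rfl rfl

lemma nul_delVert (G : SimpleGraph V) (a : V) (T : Finset {v : V // v ≠ a}) :
    nul (delVert G a) T = nul G (T.map (Function.Embedding.subtype _)) := by
  set S := T.map (Function.Embedding.subtype _) with hS
  have hcard : S.card = T.card := Finset.card_map _
  have hne : ∀ y : V, y ∈ S → y ≠ a := by
    intro y hy
    rcases Finset.mem_map.mp hy with ⟨u, hu, rfl⟩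
    exact u.2
  let ι : {x // x ∈ T} ≃ {y // y ∈ S} :=
    { toFun := fun x => ⟨x.1.1, Finset.mem_map_of_mem _ x.2⟩
      invFun := fun y => ⟨⟨y.1, hne y.1 y.2⟩, by
        rcases Finset.mem_map.mp y.2 with ⟨u, hu, huv⟩
        have : u = ⟨y.1, hne y.1 y.2⟩ := Subtype.ext huv
        rwa [← this]⟩
      left_inv := fun x => by ext; rfl
      right_inv := fun y => by ext; rfl }
  have hmat : subMat (delVert G a) T = (subMat G S).submatrix ι ι := by
    ext i j
    simp only [subMat, Matrix.submatrix_apply, Matrix.of_apply]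
    rw [eadj_delVert]
    rfl
  rw [nul, nul, hcard, hmat, Matrix.rank_submatrix]

lemma sum_del (G : SimpleGraph V) (a : V) :
    ∑ S ∈ univ.filter (fun S : Finset V => a ∉ S), ((X : Polynomial ℤ) - 1) ^ nul G S
      = qf {v : V // v ≠ a} (delVert G a) := by
  rw [qf]
  refine Finset.sum_bij' (i := fun S _ => S.subtype (· ≠ a))
    (j := fun T _ => T.map (Function.Embedding.subtype _)) ?_ ?_ ?_ ?_ ?_
  · intro S hS
    exact Finset.mem_univ _
  · intro T hT
    simp only [Finset.mem_filter, Finset.mem_univ, true_and]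
    intro ha
    rcases Finset.mem_map.mp ha with ⟨u, _, huv⟩
    exact u.2 huv
  · intro S hS
    have ha : a ∉ S := (Finset.mem_filter.mp hS).2
    rw [Finset.subtype_map, Finset.filter_eq_self]
    intro x hx h
    exact ha (h ▸ hx)
  · intro T hT
    ext u
    simp only [Finset.mem_subtype, Finset.mem_map, Function.Embedding.coe_subtype]
    constructor
    · rintro ⟨w, hw, hwu⟩
      rwa [← Subtype.ext hwu]
    · intro hu
      exact ⟨u, hu, rfl⟩
  · intro S hS
    have ha : a ∉ S := (Finset.mem_filter.mp hS).2
    rw [nul_delVert, Finset.subtype_map, Finset.filter_eq_self.mpr]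
    intro x hx h
    exact ha (h ▸ hx)

section RankLemmas2
variable {n : Type*} [Fintype n] [DecidableEq n]

lemma vecMulVec_mul_mat (u v : n → ZMod 2) (A : Matrix n n (ZMod 2)) :
    vecMulVec u v * A = vecMulVec u (v ᵥ* A) := by
  ext i j
  simp [vecMulVec, mul_apply, vecMul, dotProduct, Finset.mul_sum, mul_assoc]

lemma mat_mul_vecMulVec (u v : n → ZMod 2) (A : Matrix n n (ZMod 2)) :
    A * vecMulVec u v = vecMulVec (A *ᵥ u) v := by
  ext i j
  simp [vecMulVec, mul_apply, mulVec, dotProduct, Finset.sum_mul]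
  congr 1; ext k; ring

lemma vecMulVec_mul_vecMulVec (u v w z : n → ZMod 2) :
    vecMulVec u v * vecMulVec w z = (v ⬝ᵥ w) • vecMulVec u z := by
  ext i j
  simp [vecMulVec, mul_apply, dotProduct, Finset.sum_mul, Finset.mul_sum]
  congr 1; ext k; ring

lemma rank_conj_unit (E E' A : Matrix n n (ZMod 2)) (hE : E * E = 1) (hE' : E' * E' = 1) :
    (E * A * E').rank = A.rank := by
  have hu : IsUnit E.det := IsUnit.of_mul_eq_one _ (by rw [← Matrix.det_mul, hE, Matrix.det_one])
  have hu' : IsUnit E'.det :=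
    IsUnit.of_mul_eq_one _ (by rw [← Matrix.det_mul, hE', Matrix.det_one])
  rw [Matrix.rank_mul_eq_left_of_isUnit_det _ _ hu', Matrix.rank_mul_eq_right_of_isUnit_det _ _ hu]

lemma mat_add_self (A : Matrix n n (ZMod 2)) : A + A = 0 := by
  ext i j
  exact CharTwo.add_self_eq_zero _

end RankLemmas2

lemma rank_pivot_of_not_mem (G : SimpleGraph V) {a b : V} (hab : G.Adj a b)
    {S : Finset V} (ha : a ∈ S) (hb : b ∉ S) :
    (subMat (pivot G a b) S).rank = (subMat G S).rank := by
  set A := subMat G S with hA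
  set a0 : {x // x ∈ S} := ⟨a, ha⟩ with ha0
  set u : {x // x ∈ S} → ZMod 2 := fun x => if x = a0 then 0 else eadj G b x.1 with hu
  set v : {x // x ∈ S} → ZMod 2 := fun x => if x = a0 then 1 else 0 with hv
  have hAsymm : ∀ x y, A x y = A y x := fun x y => eadj_symm G x.1 y.1
  have hAdiag : ∀ x, A x x = 0 := fun x => eadj_self G x.1
  have sq : ∀ w z : {x // x ∈ S} → ZMod 2, z ⬝ᵥ w = 0 →
      (1 + vecMulVec w z) * (1 + vecMulVec w z) = 1 := by
    intro w z h
    have expand : (1 + vecMulVec w z) * (1 + vecMulVec w z)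
        = 1 + vecMulVec w z + vecMulVec w z + vecMulVec w z * vecMulVec w z := by
      noncomm_ring
    rw [expand, vecMulVec_mul_vecMulVec, h, zero_smul, add_zero, add_assoc, mat_add_self,
      add_zero]
  have hvu : v ⬝ᵥ u = 0 := by
    apply Finset.sum_eq_zero
    intro x _
    by_cases h : x = a0 <;> simp [hu, hv, h]
  have hvA : v ᵥ* A = fun y => A a0 y := by
    funext y
    simp [vecMul, dotProduct, hv, ite_mul, Finset.sum_ite_eq']
  have hAv : A *ᵥ v = fun x => A x a0 := by
    funext x
    simp [mulVec, dotProduct, hv, mul_ite, Finset.sum_ite_eq']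
  have hE2 : (1 + vecMulVec u v) * (1 + vecMulVec u v) = 1 := sq u v hvu
  have hE'2 : (1 + vecMulVec v u) * (1 + vecMulVec v u) = 1 := by
    refine sq v u ?_
    rw [dotProduct_comm]; exact hvu
  have key : (1 + vecMulVec u v) * A * (1 + vecMulVec v u) = subMat (pivot G a b) S := by
    have hMA : vecMulVec u v * A = vecMulVec u (fun y => A a0 y) := by
      rw [vecMulVec_mul_mat, hvA]
    have hAN : A * vecMulVec v u = vecMulVec (fun x => A x a0) u := by
      rw [mat_mul_vecMulVec, hAv]
    have hd0 : (fun y => A a0 y) ⬝ᵥ v = 0 := by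
      simp [dotProduct, hv, mul_ite, Finset.sum_ite_eq', hAdiag]
    have hMAN : vecMulVec u v * A * vecMulVec v u = 0 := by
      rw [hMA, vecMulVec_mul_vecMulVec, hd0, zero_smul]
    have e1 : (1 + vecMulVec u v) * A = A + vecMulVec u v * A := by rw [add_mul, one_mul]
    rw [e1, mul_add, mul_one, add_mul, hMAN, add_zero, hMA, hAN]
    ext x y
    simp only [Matrix.add_apply, Matrix.vecMulVec_apply]
    by_cases hx : x = a0
    · have hux : u x = 0 := by simp only [hu]; rw [if_pos hx]
      have hAxa : A x a0 = 0 := by rw [hx]; exact hAdiag a0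
      rw [hux, zero_mul, hAxa, zero_mul, add_zero, add_zero]
      exact (eadj_pivot_of_mem G a b x.1 y.1 (Or.inl (by rw [hx]))).symm
    · by_cases hy : y = a0
      · have huy : u y = 0 := by simp only [hu]; rw [if_pos hy]
        have hAay : A a0 y = 0 := by rw [hy]; exact hAdiag a0
        rw [huy, mul_zero, hAay, mul_zero, add_zero, add_zero]
        exact (eadj_pivot_of_mem G a b x.1 y.1 (Or.inr (Or.inr (Or.inl (by rw [hy]))))).symm
      · have hxa : x.1 ≠ a := fun h => hx (Subtype.ext h)
        have hya : y.1 ≠ a := fun h => hy (Subtype.ext h)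
        have hxb : x.1 ≠ b := fun h => hb (h ▸ x.2)
        have hyb : y.1 ≠ b := fun h => hb (h ▸ y.2)
        have hux : u x = eadj G b x.1 := by simp only [hu]; rw [if_neg hx]
        have huy : u y = eadj G b y.1 := by simp only [hu]; rw [if_neg hy]
        rw [hux, huy]
        by_cases hxy : x = y
        · rw [← hxy, hAdiag, zero_add, hAsymm x a0,
            show subMat (pivot G a b) S x x = eadj (pivot G a b) x.1 x.1 from rfl, eadj_self,
            mul_comm]
          exact CharTwo.add_self_eq_zero _
        · have hxy1 : x.1 ≠ y.1 := fun h => hxy (Subtype.ext h)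
          have hrhs : subMat (pivot G a b) S x y
              = eadj G x.1 y.1 + (eadj G a x.1 * eadj G b y.1 + eadj G b x.1 * eadj G a y.1) :=
            eadj_pivot G hxa hxb hya hyb hxy1
          rw [hrhs]
          have h3 : A x a0 = eadj G a x.1 := eadj_symm G x.1 a
          have h4 : A a0 y = eadj G a y.1 := rfl
          have h5 : A x y = eadj G x.1 y.1 := rfl
          rw [h3, h4, h5]
          ring
  rw [← key]
  exact rank_conj_unit _ _ _ hE2 hE'2

lemma conj_expand {n : Type*} [Fintype n] [DecidableEq n] (M A N : Matrix n n (ZMod 2)) :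
    (1 + M) * A * (1 + N) = A + M * A + (A * N + M * A * N) := by noncomm_ring

lemma sq_one {n : Type*} [Fintype n] [DecidableEq n] {M : Matrix n n (ZMod 2)}
    (h : M * M = 0) : (1 + M) * (1 + M) = 1 := by
  have expand : (1 + M) * (1 + M) = 1 + M + M + M * M := by noncomm_ring
  rw [expand, h, add_zero, add_assoc, mat_add_self, add_zero]

lemma B0_rank : (!![0,1;1,0] : Matrix (Fin 2) (Fin 2) (ZMod 2)).rank = 2 := by
  have h : (!![0,1;1,0] : Matrix (Fin 2) (Fin 2) (ZMod 2)) * !![0,1;1,0] = 1 := by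
    ext i j
    fin_cases i <;> fin_cases j <;> simp [Matrix.mul_apply, Fin.sum_univ_two] <;> decide
  have : IsUnit (!![0,1;1,0] : Matrix (Fin 2) (Fin 2) (ZMod 2)) := ⟨⟨_, _, h, h⟩, rfl⟩
  rw [Matrix.rank_of_isUnit _ this, Fintype.card_fin]

/-- product of two submodules equiv -/
def subProdEquiv {R M N : Type*} [Ring R] [AddCommGroup M] [AddCommGroup N] [Module R M]
    [Module R N] (p : Submodule R M) (q : Submodule R N) : (p.prod q) ≃ₗ[R] p × q where
  toFun z := (⟨z.1.1, z.2.1⟩, ⟨z.1.2, z.2.2⟩)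
  invFun w := ⟨(w.1.1, w.2.1), ⟨w.1.2, w.2.2⟩⟩
  left_inv z := rfl
  right_inv w := rfl
  map_add' z w := rfl
  map_smul' r z := rfl

lemma rank_fromBlocks_diag {K m n : Type*} [Field K] [Fintype m] [Fintype n] (A : Matrix m m K) (D : Matrix n n K) :
    (fromBlocks A 0 0 D).rank = A.rank + D.rank := by
  classical
  set e : ((m ⊕ n) → K) ≃ₗ[K] (m → K) × (n → K) := LinearEquiv.sumArrowLequivProdArrow m n K K
  have hmap : (LinearMap.range (fromBlocks A 0 0 D).mulVecLin).map (e : ((m ⊕ n) → K) →ₗ[K] _) =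
      (LinearMap.range A.mulVecLin).prod (LinearMap.range D.mulVecLin) := by
    ext z
    simp only [Submodule.mem_map, LinearMap.mem_range, Submodule.mem_prod]
    constructor
    · rintro ⟨w, ⟨x, rfl⟩, rfl⟩
      refine ⟨⟨x ∘ Sum.inl, ?_⟩, ⟨x ∘ Sum.inr, ?_⟩⟩ <;>
      · simp [e, Matrix.mulVecLin_apply, Matrix.fromBlocks_mulVec,
          LinearEquiv.sumArrowLequivProdArrow]
        rfl
    · rintro ⟨⟨x, hx⟩, ⟨y, hy⟩⟩
      refine ⟨Sum.elim (A *ᵥ x) (D *ᵥ y), ⟨Sum.elim x y, ?_⟩, ?_⟩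
      · simp [Matrix.mulVecLin_apply, Matrix.fromBlocks_mulVec]
      · ext <;> simp [e, LinearEquiv.sumArrowLequivProdArrow, Equiv.sumArrowEquivProdArrow, ← hx, ← hy, Matrix.mulVecLin_apply]
  have h1 : (fromBlocks A 0 0 D).rank =
      Module.finrank K ((LinearMap.range A.mulVecLin).prod (LinearMap.range D.mulVecLin)) := by
    rw [Matrix.rank, ← hmap, LinearEquiv.finrank_map_eq]
  rw [h1]
  rw [(subProdEquiv _ _).finrank_eq, Module.finrank_prod]
  rfl


lemma rank_pivot_of_mem (G : SimpleGraph V) {a b : V} (hab : G.Adj a b)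
    {S : Finset V} (ha : a ∈ S) (hb : b ∈ S) :
    (subMat G S).rank = (subMat (pivot G a b) ((S.erase a).erase b)).rank + 2 := by
  have hne : a ≠ b := hab.ne
  set T := (S.erase a).erase b with hT
  set A := subMat G S with hA
  set a0 : {x // x ∈ S} := ⟨a, ha⟩ with ha0
  set b0 : {x // x ∈ S} := ⟨b, hb⟩ with hb0
  have hab0 : a0 ≠ b0 := fun h => hne (congrArg Subtype.val h)
  set u1 : {x // x ∈ S} → ZMod 2 := fun x => if x = a0 ∨ x = b0 then 0 else eadj G a x.1 with hu1
  set u2 : {x // x ∈ S} → ZMod 2 := fun x => if x = a0 ∨ x = b0 then 0 else eadj G b x.1 with hu2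
  set v1 : {x // x ∈ S} → ZMod 2 := fun x => if x = b0 then 1 else 0 with hv1
  set v2 : {x // x ∈ S} → ZMod 2 := fun x => if x = a0 then 1 else 0 with hv2
  have hAsymm : ∀ x y, A x y = A y x := fun x y => eadj_symm G x.1 y.1
  have hAdiag : ∀ x, A x x = 0 := fun x => eadj_self G x.1
  have hu1a : u1 a0 = 0 := by simp [hu1]
  have hu1b : u1 b0 = 0 := by simp [hu1]
  have hu2a : u2 a0 = 0 := by simp [hu2]
  have hu2b : u2 b0 = 0 := by simp [hu2]
  have hAab : A a0 b0 = 1 := by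
    show eadj G a b = 1
    simp [eadj, hab]
  have hAba : A b0 a0 = 1 := by
    show eadj G b a = 1
    simp [eadj, hab.symm]
  set M := vecMulVec u1 v1 + vecMulVec u2 v2 with hM
  set N := vecMulVec v1 u1 + vecMulVec v2 u2 with hN
  have dot1 : ∀ w : {x // x ∈ S} → ZMod 2, v1 ⬝ᵥ w = w b0 := by
    intro w; simp [dotProduct, hv1, ite_mul, Finset.sum_ite_eq']
  have dot2 : ∀ w : {x // x ∈ S} → ZMod 2, v2 ⬝ᵥ w = w a0 := by
    intro w; simp [dotProduct, hv2, ite_mul, Finset.sum_ite_eq']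
  have dot1' : ∀ w : {x // x ∈ S} → ZMod 2, w ⬝ᵥ v1 = w b0 := by
    intro w; rw [dotProduct_comm]; exact dot1 w
  have dot2' : ∀ w : {x // x ∈ S} → ZMod 2, w ⬝ᵥ v2 = w a0 := by
    intro w; rw [dotProduct_comm]; exact dot2 w
  have hMM : M * M = 0 := by
    rw [hM, add_mul, mul_add, mul_add, vecMulVec_mul_vecMulVec, vecMulVec_mul_vecMulVec,
      vecMulVec_mul_vecMulVec, vecMulVec_mul_vecMulVec, dot1 u1, dot1 u2, dot2 u1, dot2 u2,
      hu1b, hu2b, hu1a, hu2a, zero_smul, zero_smul, zero_smul, zero_smul, add_zero, add_zero]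
  have hNN : N * N = 0 := by
    rw [hN, add_mul, mul_add, mul_add, vecMulVec_mul_vecMulVec, vecMulVec_mul_vecMulVec,
      vecMulVec_mul_vecMulVec, vecMulVec_mul_vecMulVec, dot1' u1, dot1' u2, dot2' u1, dot2' u2,
      hu1b, hu2b, hu1a, hu2a, zero_smul, zero_smul, zero_smul, zero_smul, add_zero, add_zero]
  have hE2 : (1 + M) * (1 + M) = 1 := sq_one hMM
  have hN2 : (1 + N) * (1 + N) = 1 := sq_one hNN
  have hv1A : v1 ᵥ* A = fun y => A b0 y := by
    funext y; simp [vecMul, dotProduct, hv1, ite_mul, Finset.sum_ite_eq']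
  have hv2A : v2 ᵥ* A = fun y => A a0 y := by
    funext y; simp [vecMul, dotProduct, hv2, ite_mul, Finset.sum_ite_eq']
  have hAv1 : A *ᵥ v1 = fun x => A x b0 := by
    funext x; simp [mulVec, dotProduct, hv1, mul_ite, Finset.sum_ite_eq']
  have hAv2 : A *ᵥ v2 = fun x => A x a0 := by
    funext x; simp [mulVec, dotProduct, hv2, mul_ite, Finset.sum_ite_eq']
  have hMA : M * A = vecMulVec u1 (fun y => A b0 y) + vecMulVec u2 (fun y => A a0 y) := by
    rw [hM, add_mul, vecMulVec_mul_mat, vecMulVec_mul_mat, hv1A, hv2A]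
  have hAN : A * N = vecMulVec (fun x => A x b0) u1 + vecMulVec (fun x => A x a0) u2 := by
    rw [hN, mul_add, mat_mul_vecMulVec, mat_mul_vecMulVec, hAv1, hAv2]
  have hMAN : M * A * N = vecMulVec u1 u2 + vecMulVec u2 u1 := by
    rw [hMA, hN, add_mul, mul_add, mul_add, vecMulVec_mul_vecMulVec, vecMulVec_mul_vecMulVec,
      vecMulVec_mul_vecMulVec, vecMulVec_mul_vecMulVec, dot1' (fun y => A b0 y),
      dot2' (fun y => A b0 y), dot1' (fun y => A a0 y), dot2' (fun y => A a0 y),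
      hAdiag b0, hAdiag a0, hAba, hAab, zero_smul, one_smul, one_smul, zero_smul,
      zero_add, add_zero]
  have key : (1 + M) * A * (1 + N) =
      A + (vecMulVec u1 (fun y => A b0 y) + vecMulVec u2 (fun y => A a0 y))
        + ((vecMulVec (fun x => A x b0) u1 + vecMulVec (fun x => A x a0) u2)
        + (vecMulVec u1 u2 + vecMulVec u2 u1)) := by
    rw [conj_expand, hMAN, hMA, hAN]
  set F := A + (vecMulVec u1 (fun y => A b0 y) + vecMulVec u2 (fun y => A a0 y))
        + ((vecMulVec (fun x => A x b0) u1 + vecMulVec (fun x => A x a0) u2)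
        + (vecMulVec u1 u2 + vecMulVec u2 u1)) with hF
  have hFxy : ∀ x y, F x y = A x y + (u1 x * A b0 y + u2 x * A a0 y)
      + ((A x b0 * u1 y + A x a0 * u2 y) + (u1 x * u2 y + u2 x * u1 y)) := by
    intro x y
    rw [hF]
    simp only [Matrix.add_apply, Matrix.vecMulVec_apply]
  have hTmem : ∀ x : V, x ∈ T ↔ x ≠ b ∧ x ≠ a ∧ x ∈ S := by
    intro x; rw [hT, Finset.mem_erase, Finset.mem_erase]
  have hu1gen : ∀ x : {x // x ∈ S}, x ≠ a0 → x ≠ b0 → u1 x = eadj G a x.1 := by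
    intro x h1 h2; simp only [hu1]; rw [if_neg]; rintro (h | h) <;> [exact h1 h; exact h2 h]
  have hu2gen : ∀ x : {x // x ∈ S}, x ≠ a0 → x ≠ b0 → u2 x = eadj G b x.1 := by
    intro x h1 h2; simp only [hu2]; rw [if_neg]; rintro (h | h) <;> [exact h1 h; exact h2 h]
  let σ : (Fin 2 ⊕ {x // x ∈ T}) ≃ {x // x ∈ S} :=
    { toFun := Sum.elim (fun j : Fin 2 => if j = 0 then a0 else b0)
        (fun t => ⟨t.1, ((hTmem t.1).mp t.2).2.2⟩)
      invFun := fun s => if h1 : s.1 = a then Sum.inl 0 else if h2 : s.1 = b then Sum.inl 1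
        else Sum.inr ⟨s.1, (hTmem s.1).mpr ⟨h2, h1, s.2⟩⟩
      left_inv := by
        rintro (j | t)
        · fin_cases j <;> simp [Ne.symm hne, ha0, hb0]
        · have h1 : t.1 ≠ a := ((hTmem t.1).mp t.2).2.1
          have h2 : t.1 ≠ b := ((hTmem t.1).mp t.2).1
          simp [h1, h2]
      right_inv := by
        intro s
        dsimp only
        rcases eq_or_ne s.1 a with h1 | h1
        · rw [dif_pos h1]
          simp only [Sum.elim_inl]
          exact Subtype.ext h1.symm
        · rw [dif_neg h1]
          rcases eq_or_ne s.1 b with h2 | h2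
          · rw [dif_pos h2]
            simp only [Sum.elim_inl]
            refine Subtype.ext ?_
            rw [if_neg (by decide : (1 : Fin 2) ≠ 0)]
            exact h2.symm
          · rw [dif_neg h2]
            exact Subtype.ext rfl }
  have hσa : σ (Sum.inl 0) = a0 := by simp [σ]
  have hσb : σ (Sum.inl 1) = b0 := by
    simp only [σ, Equiv.coe_fn_mk, Sum.elim_inl]
    rw [if_neg (by decide : (1 : Fin 2) ≠ 0)]
  have hσt : ∀ t : {x // x ∈ T}, (σ (Sum.inr t)).1 = t.1 := fun t => rfl
  have hσta : ∀ t : {x // x ∈ T}, σ (Sum.inr t) ≠ a0 := by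
    intro t h
    exact ((hTmem t.1).mp t.2).2.1 (congrArg Subtype.val h)
  have hσtb : ∀ t : {x // x ∈ T}, σ (Sum.inr t) ≠ b0 := by
    intro t h
    exact ((hTmem t.1).mp t.2).1 (congrArg Subtype.val h)
  have hsub : F.submatrix σ σ = Matrix.fromBlocks !![0,1;1,0] 0 0 (subMat (pivot G a b) T) := by
    have hAat : ∀ t : {x // x ∈ T}, A a0 (σ (Sum.inr t)) = eadj G a (σ (Sum.inr t)).1 := fun _ => rfl
    have hAbt : ∀ t : {x // x ∈ T}, A b0 (σ (Sum.inr t)) = eadj G b (σ (Sum.inr t)).1 := fun _ => rfl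
    have hAta : ∀ t : {x // x ∈ T}, A (σ (Sum.inr t)) a0 = eadj G a (σ (Sum.inr t)).1 :=
      fun t => (hAsymm _ _).trans rfl
    have hAtb : ∀ t : {x // x ∈ T}, A (σ (Sum.inr t)) b0 = eadj G b (σ (Sum.inr t)).1 :=
      fun t => (hAsymm _ _).trans rfl
    ext i j
    rcases i with i | s <;> rcases j with j | t
    · fin_cases i <;> fin_cases j
      · show F a0 a0 = 0
        rw [hFxy, hu1a, hu2a, hAdiag]
        simp
      · show F a0 b0 = 1
        rw [hFxy, hu1a, hu2a, hu1b, hu2b, hAab]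
        simp
      · show F b0 a0 = 1
        rw [hFxy, hu1a, hu2a, hu1b, hu2b, hAba]
        simp
      · show F b0 b0 = 0
        rw [hFxy, hu1b, hu2b, hAdiag]
        simp
    · fin_cases i
      · show F a0 (σ (Sum.inr t)) = 0
        rw [hFxy, hu1a, hu2a, hAab, hAdiag, hu1gen _ (hσta t) (hσtb t), hAat]
        simp [CharTwo.add_self_eq_zero]
      · show F b0 (σ (Sum.inr t)) = 0
        rw [hFxy, hu1b, hu2b, hAba, hAdiag, hu2gen _ (hσta t) (hσtb t), hAbt]
        simp [CharTwo.add_self_eq_zero]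
    · fin_cases j
      · show F (σ (Sum.inr s)) a0 = 0
        rw [hFxy, hu1a, hu2a, hAba, hAdiag, hu1gen _ (hσta s) (hσtb s), hAta]
        simp [CharTwo.add_self_eq_zero]
      · show F (σ (Sum.inr s)) b0 = 0
        rw [hFxy, hu1b, hu2b, hAab, hAdiag, hu2gen _ (hσta s) (hσtb s), hAtb]
        simp [CharTwo.add_self_eq_zero]
    · show F (σ (Sum.inr s)) (σ (Sum.inr t)) = subMat (pivot G a b) T s t
      rw [hFxy, hu1gen _ (hσta s) (hσtb s), hu2gen _ (hσta s) (hσtb s),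
        hu1gen _ (hσta t) (hσtb t), hu2gen _ (hσta t) (hσtb t), hAat, hAbt, hAta s, hAtb s]
      have hta : (σ (Sum.inr t)).1 ≠ a := ((hTmem t.1).mp t.2).2.1
      have htb : (σ (Sum.inr t)).1 ≠ b := ((hTmem t.1).mp t.2).1
      have hsa : (σ (Sum.inr s)).1 ≠ a := ((hTmem s.1).mp s.2).2.1
      have hsb : (σ (Sum.inr s)).1 ≠ b := ((hTmem s.1).mp s.2).1
      have hRHS : subMat (pivot G a b) T s t = eadj (pivot G a b) (σ (Sum.inr s)).1 (σ (Sum.inr t)).1 := rfl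
      rw [hRHS]
      by_cases hst : (σ (Sum.inr s)) = (σ (Sum.inr t))
      · rw [show A (σ (Sum.inr s)) (σ (Sum.inr t)) = 0 from hst ▸ hAdiag _, hst, eadj_self]
        generalize eadj G a (σ (Sum.inr t)).1 = p
        generalize eadj G b (σ (Sum.inr t)).1 = q
        revert p q; decide
      · have hst1 : (σ (Sum.inr s)).1 ≠ (σ (Sum.inr t)).1 := fun h => hst (Subtype.ext h)
        rw [show A (σ (Sum.inr s)) (σ (Sum.inr t))
            = eadj G (σ (Sum.inr s)).1 (σ (Sum.inr t)).1 from rfl,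
          eadj_pivot G hsa hsb hta htb hst1]
        generalize eadj G (σ (Sum.inr s)).1 (σ (Sum.inr t)).1 = e
        generalize eadj G a (σ (Sum.inr s)).1 = p
        generalize eadj G b (σ (Sum.inr s)).1 = q
        generalize eadj G a (σ (Sum.inr t)).1 = r
        generalize eadj G b (σ (Sum.inr t)).1 = w
        revert e p q r w; decide
  have hrankA : A.rank = 2 + (subMat (pivot G a b) T).rank := by
    calc A.rank = ((1 + M) * A * (1 + N)).rank := (rank_conj_unit _ _ _ hE2 hN2).symm
      _ = F.rank := by rw [key, hF]
      _ = (F.submatrix σ σ).rank := (Matrix.rank_submatrix F σ σ).symm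
      _ = (Matrix.fromBlocks !![0,1;1,0] 0 0 (subMat (pivot G a b) T)).rank := by rw [hsub]
      _ = 2 + (subMat (pivot G a b) T).rank := by
          rw [rank_fromBlocks_diag, B0_rank]
  rw [hrankA, Nat.add_comm]

lemma nul_pivot_not_mem (G : SimpleGraph V) {a b : V} (hab : G.Adj a b)
    {S : Finset V} (ha : a ∈ S) (hb : b ∉ S) :
    nul (pivot G a b) S = nul G S := by
  rw [nul, nul, rank_pivot_of_not_mem G hab ha hb]

lemma nul_pivot_mem (G : SimpleGraph V) {a b : V} (hab : G.Adj a b)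
    {S : Finset V} (ha : a ∈ S) (hb : b ∈ S) :
    nul (pivot G a b) ((S.erase a).erase b) = nul G S := by
  have hne : a ≠ b := hab.ne
  have hb' : b ∈ S.erase a := Finset.mem_erase.mpr ⟨fun h => hne h.symm, hb⟩
  have hc : ((S.erase a).erase b).card = S.card - 1 - 1 := by
    rw [Finset.card_erase_of_mem hb', Finset.card_erase_of_mem ha]
  rw [nul, nul, rank_pivot_of_mem G hab ha hb, hc]
  omega

lemma sum_pivot (G : SimpleGraph V) {a b : V} (hab : G.Adj a b) :
    ∑ S ∈ univ.filter (fun S : Finset V => a ∈ S), ((X : Polynomial ℤ) - 1) ^ nul G S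
      = ∑ S ∈ univ.filter (fun S : Finset V => b ∉ S),
          ((X : Polynomial ℤ) - 1) ^ nul (pivot G a b) S := by
  have hne : a ≠ b := hab.ne
  refine Finset.sum_bij' (i := fun S _ => if b ∈ S then (S.erase a).erase b else S)
    (j := fun T _ => if a ∈ T then T else insert a (insert b T)) ?_ ?_ ?_ ?_ ?_
  · intro S hS
    simp only [Finset.mem_filter, Finset.mem_univ, true_and]
    by_cases hb : b ∈ S
    · rw [if_pos hb]; exact Finset.notMem_erase b _
    · rw [if_neg hb]; exact hb
  · intro T hT
    simp only [Finset.mem_filter, Finset.mem_univ, true_and]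
    by_cases haT : a ∈ T
    · rw [if_pos haT]; exact haT
    · rw [if_neg haT]; exact Finset.mem_insert_self a _
  · intro S hS
    have haS : a ∈ S := by simpa using (Finset.mem_filter.mp hS).2
    by_cases hb : b ∈ S
    · rw [if_pos hb]
      have haT : a ∉ (S.erase a).erase b := fun h =>
        (Finset.mem_erase.mp (Finset.mem_erase.mp h).2).1 rfl
      rw [if_neg haT,
        Finset.insert_erase (Finset.mem_erase.mpr ⟨fun h => hne h.symm, hb⟩),
        Finset.insert_erase haS]
    · rw [if_neg hb, if_pos haS]
  · intro T hT
    have hbT : b ∉ T := by simpa using (Finset.mem_filter.mp hT).2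
    by_cases haT : a ∈ T
    · rw [if_pos haT, if_neg hbT]
    · rw [if_neg haT]
      have hbmem : b ∈ insert a (insert b T) :=
        Finset.mem_insert_of_mem (Finset.mem_insert_self b T)
      rw [if_pos hbmem, Finset.erase_insert, Finset.erase_insert hbT]
      simp only [Finset.mem_insert, not_or]
      exact ⟨hne, haT⟩
  · intro S hS
    have haS : a ∈ S := by simpa using (Finset.mem_filter.mp hS).2
    by_cases hb : b ∈ S
    · rw [if_pos hb, nul_pivot_mem G hab haS hb]
    · rw [if_neg hb, nul_pivot_not_mem G hab haS hb]

lemma qf_rec (G : SimpleGraph V) {a b : V} (hab : G.Adj a b) :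
    qf V G = qf {v : V // v ≠ a} (delVert G a) +
      qf {v : V // v ≠ b} (delVert (pivot G a b) b) := by
  have hsplit : qf V G
      = ∑ S ∈ univ.filter (fun S : Finset V => a ∉ S), ((X : Polynomial ℤ) - 1) ^ nul G S
      + ∑ S ∈ univ.filter (fun S : Finset V => a ∈ S), ((X : Polynomial ℤ) - 1) ^ nul G S := by
    rw [qf, ← Finset.sum_filter_add_sum_filter_not univ (fun S : Finset V => a ∉ S)]
    congr 2
    ext S
    simp [not_not]
  rw [hsplit, sum_del G a, sum_pivot G hab, sum_del (pivot G a b) b]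

lemma qf_is : IsInterlacePoly qf := by
  refine ⟨?_, ?_, ?_⟩
  · intro V W _ _ _ _ G H ⟨e⟩
    exact qf_iso G H e
  · intro V _ _ G a b hab
    exact qf_rec G hab
  · intro V _ _
    exact qf_bot

lemma unique_aux (q1 q2 : ∀ (V : Type) [Fintype V] [DecidableEq V], SimpleGraph V → Polynomial ℤ)
    (h1 : IsInterlacePoly q1) (h2 : IsInterlacePoly q2) :
    ∀ (n : ℕ) (V : Type) [Fintype V] [DecidableEq V], Fintype.card V ≤ n →
      ∀ G : SimpleGraph V, q1 V G = q2 V G := by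
  intro n
  induction n with
  | zero =>
    intro V _ _ hcard G
    have hemp : IsEmpty V := Fintype.card_eq_zero_iff.mp (Nat.le_zero.mp hcard)
    have hbot : G = ⊥ := by
      ext x y
      exact hemp.elim x
    rw [hbot, h1.2.2, h2.2.2]
  | succ n ih =>
    intro V _ _ hcard G
    by_cases hE : ∃ a b, G.Adj a b
    · obtain ⟨a, b, hab⟩ := hE
      rw [h1.2.1 V G a b hab, h2.2.1 V G a b hab]
      have hca : Fintype.card {v : V // v ≠ a} ≤ n := by
        have h' : Fintype.card {v : V // v ≠ a} < Fintype.card V :=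
          Fintype.card_subtype_lt (x := a) (by simp)
        omega
      have hcb : Fintype.card {v : V // v ≠ b} ≤ n := by
        have h' : Fintype.card {v : V // v ≠ b} < Fintype.card V :=
          Fintype.card_subtype_lt (x := b) (by simp)
        omega
      rw [ih _ hca _, ih _ hcb _]
    · have hbot : G = ⊥ := by
        ext x y
        simp only [SimpleGraph.bot_adj, iff_false]
        exact fun h => hE ⟨x, y, h⟩
      rw [hbot, h1.2.2, h2.2.2]
end
end InterlaceAux

theorem interlacePoly_existsUnique :
    ∃! q : (∀ (V : Type) [Fintype V] [DecidableEq V], SimpleGraph V → Polynomial ℤ),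
      IsInterlacePoly q := by
  refine ⟨InterlaceAux.qf, InterlaceAux.qf_is, ?_⟩
  intro q2 h2
  funext V instF instD G
  exact InterlaceAux.unique_aux q2 InterlaceAux.qf h2 InterlaceAux.qf_is
    (Fintype.card V) V le_rfl G
end

section
/- For graphs G1 and G2 on disjoint vertex sets, the interlace polynomial of their disjoint union is the product: q(G1 ∪ G2) = q(G1) · q(G2). -/
lemma pivot_sum_inl {V W : Type} (G : SimpleGraph V) (H : SimpleGraph W) (a b : V) :
    pivot (G ⊕g H) (Sum.inl a) (Sum.inl b) = (pivot G a b) ⊕g H := by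
  ext x y
  cases x <;> cases y <;>
    simp [pivot, togglePair, SimpleGraph.sum_adj]

def delSumInlEquiv {V W : Type} (a : V) :
    {v : V ⊕ W // v ≠ Sum.inl a} ≃ ({v : V // v ≠ a} ⊕ W) where
  toFun := fun v => match v with
    | ⟨Sum.inl x, h⟩ => Sum.inl ⟨x, fun hx => h (by rw [hx])⟩
    | ⟨Sum.inr y, _⟩ => Sum.inr y
  invFun := fun s => match s with
    | Sum.inl ⟨x, h⟩ => ⟨Sum.inl x, by simp [h]⟩
    | Sum.inr y => ⟨Sum.inr y, by simp⟩
  left_inv := by rintro ⟨x | y, h⟩ <;> rfl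
  right_inv := by rintro (⟨x, h⟩ | y) <;> rfl

def delSumInlIso {V W : Type} (G : SimpleGraph V) (H : SimpleGraph W) (a : V) :
    delVert (G ⊕g H) (Sum.inl a) ≃g (delVert G a) ⊕g H :=
  ⟨delSumInlEquiv a, by
    rintro ⟨x | x, hx⟩ ⟨y | y, hy⟩ <;>
      simp [delSumInlEquiv, delVert, SimpleGraph.sum_adj]⟩

lemma card_ne {V : Type} [Fintype V] [DecidableEq V] (a : V) :
    Fintype.card {v : V // v ≠ a} + 1 = Fintype.card V := by
  have h : Fintype.card {v : V // ¬ v = a} = Fintype.card V - 1 := by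
    rw [Fintype.card_subtype_compl, Fintype.card_subtype_eq]
  have h1 : 1 ≤ Fintype.card V := Fintype.card_pos_iff.mpr ⟨a⟩
  simp only [ne_eq]
  omega

lemma bot_sum_bot {V W : Type} :
    ((⊥ : SimpleGraph V) ⊕g (⊥ : SimpleGraph W)) = ⊥ := by
  ext x y; cases x <;> cases y <;> simp

lemma interlace_step
    (q : ∀ (V : Type) [Fintype V] [DecidableEq V], SimpleGraph V → Polynomial ℤ)
    (hq : IsInterlacePoly q) (n : ℕ)
    (IH : ∀ m, m < n → ∀ (V W : Type) [Fintype V] [DecidableEq V] [Fintype W] [DecidableEq W]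
      (G : SimpleGraph V) (H : SimpleGraph W), Fintype.card V + Fintype.card W = m →
      q (V ⊕ W) (G ⊕g H) = q V G * q W H)
    (V W : Type) [Fintype V] [DecidableEq V] [Fintype W] [DecidableEq W]
    (G : SimpleGraph V) (H : SimpleGraph W)
    (hn : Fintype.card V + Fintype.card W = n)
    (a b : V) (hab : G.Adj a b) :
    q (V ⊕ W) (G ⊕g H) = q V G * q W H := by
  obtain ⟨hiso, hrec, hbot⟩ := hq
  have hab' : (G ⊕g H).Adj (Sum.inl a) (Sum.inl b) := by simpa using hab
  have h1 := hrec (V ⊕ W) (G ⊕g H) (Sum.inl a) (Sum.inl b) hab'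
  rw [pivot_sum_inl] at h1
  have e1 := hiso _ _ (delVert (G ⊕g H) (Sum.inl a)) ((delVert G a) ⊕g H)
    ⟨delSumInlIso G H a⟩
  have e2 := hiso _ _ (delVert ((pivot G a b) ⊕g H) (Sum.inl b))
    ((delVert (pivot G a b) b) ⊕g H) ⟨delSumInlIso _ H b⟩
  have c1 : Fintype.card {v : V // v ≠ a} + Fintype.card W < n := by
    have := card_ne (V := V) a; omega
  have c2 : Fintype.card {v : V // v ≠ b} + Fintype.card W < n := by
    have := card_ne (V := V) b; omega
  rw [h1, e1, e2, IH _ c1 _ _ _ _ rfl, IH _ c2 _ _ _ _ rfl, hrec V G a b hab]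
  ring

theorem interlacePoly_disjUnion
    (q : ∀ (V : Type) [Fintype V] [DecidableEq V], SimpleGraph V → Polynomial ℤ)
    (hq : IsInterlacePoly q)
    {V W : Type} [Fintype V] [DecidableEq V] [Fintype W] [DecidableEq W]
    (G : SimpleGraph V) (H : SimpleGraph W) :
    q (V ⊕ W) (G ⊕g H) = q V G * q W H := by
  suffices h : ∀ n (V W : Type) [Fintype V] [DecidableEq V] [Fintype W] [DecidableEq W]
      (G : SimpleGraph V) (H : SimpleGraph W), Fintype.card V + Fintype.card W = n →
      q (V ⊕ W) (G ⊕g H) = q V G * q W H from h _ V W G H rfl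
  intro n
  induction n using Nat.strong_induction_on with
  | _ n IH =>
    intro V W _ _ _ _ G H hn
    by_cases hG : ∃ a b, G.Adj a b
    · obtain ⟨a, b, hab⟩ := hG
      exact interlace_step q hq n IH V W G H hn a b hab
    · by_cases hH : ∃ a b, H.Adj a b
      · obtain ⟨a, b, hab⟩ := hH
        have comm := hq.1 _ _ (G ⊕g H) (H ⊕g G) ⟨SimpleGraph.Iso.sumComm⟩
        rw [comm, interlace_step q hq n IH W V H G (by omega) a b hab, mul_comm]
      · have hGbot : G = ⊥ := by
          ext u v
          simp only [SimpleGraph.bot_adj, iff_false]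
          exact fun h => hG ⟨u, v, h⟩
        have hHbot : H = ⊥ := by
          ext u v
          simp only [SimpleGraph.bot_adj, iff_false]
          exact fun h => hH ⟨u, v, h⟩
        subst hGbot hHbot
        rw [bot_sum_bot, hq.2.2, hq.2.2, hq.2.2, Fintype.card_sum, pow_add]
end

section
/- For any finite simple graph G and any induced subgraph H of G, the degree of q(G) is at least the degree of q(H); in particular deg(q(G)) ≥ α(G), the independence number of G. -/
-- generic iso builder
def isoOfAdjEquiv {A B : Type} (G : SimpleGraph A) (H : SimpleGraph B) (e : A ≃ B)
    (h : ∀ x y, G.Adj x y ↔ H.Adj (e x) (e y)) : G ≃g H :=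
  ⟨e, fun {x y} => (h x y).symm⟩

lemma add_nn_natDegree_le (p r : Polynomial ℤ)
    (hp : ∀ k, 0 ≤ p.coeff k) (hr : ∀ k, 0 ≤ r.coeff k) :
    p.natDegree ≤ (p + r).natDegree := by
  by_cases h : p = 0
  · simp [h]
  · apply Polynomial.le_natDegree_of_ne_zero
    have h1 : p.coeff p.natDegree ≠ 0 := by
      exact Polynomial.leadingCoeff_ne_zero.mpr h
    have h2 := hp p.natDegree
    have h3 := hr p.natDegree
    rw [Polynomial.coeff_add]
    omega

lemma card_ne_sub {V : Type} [Fintype V] [DecidableEq V] (a : V) :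
    Fintype.card {v : V // v ≠ a} = Fintype.card V - 1 := by
  simp [Fintype.card_subtype_compl]

lemma coeff_nn (q : ∀ (V : Type) [Fintype V] [DecidableEq V], SimpleGraph V → Polynomial ℤ)
    (hq : IsInterlacePoly q) :
    ∀ (n : ℕ) (V : Type) [Fintype V] [DecidableEq V] (G : SimpleGraph V),
      Fintype.card V = n → ∀ k, 0 ≤ (q V G).coeff k := by
  intro n
  induction n using Nat.strong_induction_on with
  | _ n ih =>
    intro V _ _ G hcard k
    by_cases hE : ∃ a b, G.Adj a b
    · obtain ⟨a, b, hab⟩ := hE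
      have hn : 0 < n := by
        rw [← hcard]; exact Fintype.card_pos_iff.mpr ⟨a⟩
      rw [hq.2.1 V G a b hab, Polynomial.coeff_add]
      have c1 := ih (n - 1) (by omega) {v : V // v ≠ a} (delVert G a)
        (by rw [card_ne_sub, hcard]) k
      have c2 := ih (n - 1) (by omega) {v : V // v ≠ b} (delVert (pivot G a b) b)
        (by rw [card_ne_sub, hcard]) k
      omega
    · push_neg at hE
      have hbot : G = ⊥ := by
        ext x y; simp [hE]
      rw [hbot, hq.2.2, hcard, Polynomial.coeff_X_pow]
      split <;> norm_num

def delSwap {V : Type} {a u : V} (hua : u ≠ a) (hau : a ≠ u) :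
    {w : {x : V // x ≠ a} // w ≠ (⟨u, hua⟩ : {x : V // x ≠ a})} ≃
    {w : {x : V // x ≠ u} // w ≠ (⟨a, hau⟩ : {x : V // x ≠ u})} where
  toFun w := ⟨⟨w.1.1, fun h => w.2 (Subtype.ext h)⟩, fun h => w.1.2 (congrArg Subtype.val h)⟩
  invFun w := ⟨⟨w.1.1, fun h => w.2 (Subtype.ext h)⟩, fun h => w.1.2 (congrArg Subtype.val h)⟩
  left_inv w := rfl
  right_inv w := rfl

lemma togglePair_delVert {V : Type} (G : SimpleGraph V) (a : V)
    (u v x y : {x : V // x ≠ a}) :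
    togglePair (G.comap (fun v : {x : V // x ≠ a} => v.1)) u v x y ↔
      togglePair G u.1 v.1 x.1 y.1 := by
  unfold togglePair
  simp only [SimpleGraph.comap_adj, ne_eq, Subtype.ext_iff]

lemma pivot_delVert_adj {V : Type} (G : SimpleGraph V) (a : V)
    (u v x y : {x : V // x ≠ a}) :
    (pivot (delVert G a) u v).Adj x y ↔ (pivot G u.1 v.1).Adj x.1 y.1 := by
  unfold pivot delVert
  simp only [togglePair_delVert, SimpleGraph.comap_adj, ne_eq, Subtype.ext_iff]

lemma del_le (q : ∀ (V : Type) [Fintype V] [DecidableEq V], SimpleGraph V → Polynomial ℤ)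
    (hq : IsInterlacePoly q) :
    ∀ (n : ℕ) (V : Type) [Fintype V] [DecidableEq V] (G : SimpleGraph V),
      Fintype.card V = n → ∀ a : V,
      (q {v : V // v ≠ a} (delVert G a)).natDegree ≤ (q V G).natDegree := by
  intro n
  induction n using Nat.strong_induction_on with
  | _ n ih =>
    intro V _ _ G hcard a
    by_cases ha : ∃ b, G.Adj a b
    · obtain ⟨b, hab⟩ := ha
      rw [hq.2.1 V G a b hab]
      exact add_nn_natDegree_le _ _ (coeff_nn q hq _ _ _ rfl) (coeff_nn q hq _ _ _ rfl)
    · push_neg at ha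
      by_cases hE : ∃ u v : V, G.Adj u v
      · obtain ⟨u, v, huv⟩ := hE
        have hn : 0 < n := by rw [← hcard]; exact Fintype.card_pos_iff.mpr ⟨a⟩
        have hua : u ≠ a := fun h => ha v (h ▸ huv)
        have hva : v ≠ a := fun h => ha u (h ▸ huv.symm)
        have huv' : (delVert G a).Adj ⟨u, hua⟩ ⟨v, hva⟩ := huv
        rw [hq.2.1 _ (delVert G a) ⟨u, hua⟩ ⟨v, hva⟩ huv']
        have hA : q _ (delVert (delVert G a) ⟨u, hua⟩) =
            q _ (delVert (delVert G u) ⟨a, hua.symm⟩) :=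
          hq.1 _ _ _ _ ⟨isoOfAdjEquiv _ _ (delSwap hua hua.symm) (fun x y => Iff.rfl)⟩
        have hB : q _ (delVert (pivot (delVert G a) ⟨u, hua⟩ ⟨v, hva⟩) ⟨v, hva⟩) =
            q _ (delVert (delVert (pivot G u v) v) ⟨a, hva.symm⟩) :=
          hq.1 _ _ _ _ ⟨isoOfAdjEquiv _ _ (delSwap hva hva.symm)
            (fun x y => pivot_delVert_adj G a ⟨u, hua⟩ ⟨v, hva⟩ x.1 y.1)⟩
        rw [hA, hB]
        refine le_trans (Polynomial.natDegree_add_le _ _) (max_le ?_ ?_)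
        · refine le_trans (ih (n - 1) (by omega) {x : V // x ≠ u} (delVert G u)
            (by rw [card_ne_sub, hcard]) ⟨a, hua.symm⟩) ?_
          rw [hq.2.1 V G u v huv]
          exact add_nn_natDegree_le _ _ (coeff_nn q hq _ _ _ rfl) (coeff_nn q hq _ _ _ rfl)
        · refine le_trans (ih (n - 1) (by omega) {x : V // x ≠ v}
            (delVert (pivot G u v) v) (by rw [card_ne_sub, hcard]) ⟨a, hva.symm⟩) ?_
          rw [hq.2.1 V G u v huv, add_comm]
          exact add_nn_natDegree_le _ _ (coeff_nn q hq _ _ _ rfl) (coeff_nn q hq _ _ _ rfl)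
      · push_neg at hE
        have hbot : G = ⊥ := by ext x y; simp [hE]
        have hbot' : delVert G a = ⊥ := by
          subst hbot; ext x y
          simp [delVert]
        rw [hbot', hbot, hq.2.2, hq.2.2, Polynomial.natDegree_X_pow,
          Polynomial.natDegree_X_pow, card_ne_sub]
        omega

lemma induced_le (q : ∀ (V : Type) [Fintype V] [DecidableEq V], SimpleGraph V → Polynomial ℤ)
    (hq : IsInterlacePoly q) :
    ∀ (m : ℕ) (V : Type) [Fintype V] [DecidableEq V] (G : SimpleGraph V) (s : Finset V),
      sᶜ.card = m →
      (q {v : V // v ∈ s} (G.comap (fun v => v.1))).natDegree ≤ (q V G).natDegree := by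
  intro m
  induction m with
  | zero =>
    intro V _ _ G s hm
    have hs : s = Finset.univ := by
      have h := Finset.card_eq_zero.mp hm
      rwa [Finset.compl_eq_empty_iff] at h
    subst hs
    have h2 : q _ (G.comap (fun v : {v : V // v ∈ (Finset.univ : Finset V)} => v.1)) = q V G :=
      hq.1 _ _ _ _ ⟨isoOfAdjEquiv _ _
        (Equiv.subtypeUnivEquiv (fun x => Finset.mem_univ x)) (fun x y => Iff.rfl)⟩
    rw [h2]
  | succ m ihm =>
    intro V _ _ G s hm
    have hne : sᶜ.Nonempty := by rw [← Finset.card_pos, hm]; omega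
    obtain ⟨a, hac⟩ := hne
    have has : a ∉ s := Finset.mem_compl.mp hac
    set s' : Finset {x : V // x ≠ a} := Finset.univ.filter (fun v => v.1 ∈ s) with hs'
    have hcs' : s'.card = s.card := by
      apply Finset.card_bij (fun v _ => v.1)
      · intro v hv; simpa [hs'] using hv
      · intro v1 h1 v2 h2 h; exact Subtype.ext h
      · intro b hb; exact ⟨⟨b, fun h => has (h ▸ hb)⟩, by simp [hs', hb], rfl⟩
    have hm' : s'ᶜ.card = m := by
      have h1 := Finset.card_compl s'
      have h2 := Finset.card_compl s
      have h3 := card_ne_sub a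
      have h4 : s.card ≤ Fintype.card V := s.card_le_univ
      omega
    let e : {v : V // v ∈ s} ≃ {v : {x : V // x ≠ a} // v ∈ s'} :=
      { toFun := fun v => ⟨⟨v.1, fun h => has (h ▸ v.2)⟩,
          Finset.mem_filter.mpr ⟨Finset.mem_univ _, v.2⟩⟩
        invFun := fun v => ⟨v.1.1, (Finset.mem_filter.mp v.2).2⟩
        left_inv := fun v => rfl
        right_inv := fun v => rfl }
    have key : q _ (G.comap (fun v : {v : V // v ∈ s} => v.1)) =
        q _ ((delVert G a).comap (fun v : {v : {x : V // x ≠ a} // v ∈ s'} => v.1)) :=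
      hq.1 _ _ _ _ ⟨isoOfAdjEquiv _ _ e (fun x y => Iff.rfl)⟩
    rw [key]
    exact le_trans (ihm {x : V // x ≠ a} (delVert G a) s' hm')
      (del_le q hq (Fintype.card V) V G rfl a)

theorem interlacePoly_degree_induced_and_indep
    (q : ∀ (V : Type) [Fintype V] [DecidableEq V], SimpleGraph V → Polynomial ℤ)
    (hq : IsInterlacePoly q)
    {V : Type} [Fintype V] [DecidableEq V] (G : SimpleGraph V) :
    (∀ s : Finset V,
      (q {v : V // v ∈ s} (G.comap (fun v => v.1))).natDegree ≤ (q V G).natDegree) ∧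
    (∀ s : Finset V, (∀ x ∈ s, ∀ y ∈ s, ¬ G.Adj x y) →
      s.card ≤ (q V G).natDegree) := by
  have part1 : ∀ s : Finset V,
      (q {v : V // v ∈ s} (G.comap (fun v => v.1))).natDegree ≤ (q V G).natDegree :=
    fun s => induced_le q hq (sᶜ.card) V G s rfl
  refine ⟨part1, fun s hind => ?_⟩
  have hbot : (G.comap (fun v : {v : V // v ∈ s} => v.1)) = ⊥ := by
    ext x y
    simp only [SimpleGraph.comap_adj, SimpleGraph.bot_adj, iff_false]
    exact hind x.1 x.2 y.1 y.2
  have h := part1 s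
  rw [hbot, hq.2.2, Polynomial.natDegree_X_pow] at h
  have hc : Fintype.card {v : V // v ∈ s} = s.card :=
    (Fintype.card_congr (Equiv.refl _)).trans (Fintype.card_coe s)
  omega
end

section
/- For every finite simple graph G with m edges, q(G; 1) ≥ m + 1. -/
lemma pivot_adj_left {V : Type} (G : SimpleGraph V) (a b x : V) :
    (pivot G a b).Adj a x ↔ G.Adj a x := by
  have h : ¬ togglePair G a b a x := fun ⟨⟨h1, _⟩, _⟩ => h1 rfl
  show (togglePair G a b a x ∧ _ ∧ _) ∨ (¬ togglePair G a b a x ∧ G.Adj a x) ↔ _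
  tauto

lemma delVert_edge_ncard {V : Type} (G : SimpleGraph V) (a : V) :
    (delVert G a).edgeSet.ncard = {e ∈ G.edgeSet | a ∉ e}.ncard := by
  have hinj : Function.Injective (Sym2.map (Subtype.val : {v : V // v ≠ a} → V)) :=
    Sym2.map.injective Subtype.val_injective
  rw [← Set.ncard_image_of_injective _ hinj]
  congr 1
  ext e
  constructor
  · rintro ⟨e', he', rfl⟩
    induction e' with
    | h x y =>
      refine ⟨he', ?_⟩
      simp only [Sym2.map_pair_eq, Sym2.mem_iff]
      rintro (h | h) <;> [exact x.2 h.symm; exact y.2 h.symm]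
  · rintro ⟨he, ha⟩
    induction e with
    | h x y =>
      simp only [Sym2.mem_iff, not_or] at ha
      refine ⟨s(⟨x, fun h => ha.1 h.symm⟩, ⟨y, fun h => ha.2 h.symm⟩), he, rfl⟩

lemma edge_count_ineq {V : Type} [Fintype V] (G : SimpleGraph V) {a b : V}
    (hab : G.Adj a b) :
    G.edgeSet.ncard ≤
      (delVert G a).edgeSet.ncard + (delVert (pivot G a b) b).edgeSet.ncard + 1 := by
  classical
  set H := pivot G a b
  rw [delVert_edge_ncard, delVert_edge_ncard]
  have hsplit : G.edgeSet = {e ∈ G.edgeSet | a ∉ e} ∪ {e ∈ G.edgeSet | a ∈ e} := by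
    ext e; by_cases h : a ∈ e <;> simp [h]
  have h1 : G.edgeSet.ncard ≤
      {e ∈ G.edgeSet | a ∉ e}.ncard + {e ∈ G.edgeSet | a ∈ e}.ncard := by
    have := Set.ncard_union_le {e ∈ G.edgeSet | a ∉ e} {e ∈ G.edgeSet | a ∈ e}
    rwa [← hsplit] at this
  have hsub : {e ∈ G.edgeSet | a ∈ e} \ {s(a, b)} ⊆ {e ∈ H.edgeSet | b ∉ e} := by
    rintro e ⟨⟨he, hae⟩, hne⟩
    simp only [Set.mem_singleton_iff] at hne
    induction e with
    | h x y =>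
      rw [Sym2.mem_iff] at hae
      -- wlog x = a
      rcases hae with h | h
      · subst h
        have hyb : y ≠ b := fun hh => hne (by rw [hh])
        refine ⟨(pivot_adj_left G a b y).mpr he, ?_⟩
        simp only [Sym2.mem_iff, not_or]
        exact ⟨(G.ne_of_adj hab).symm, fun hh => hyb hh.symm⟩
      · subst h
        have hxb : x ≠ b := fun hh => hne (by rw [hh, Sym2.eq_swap])
        refine ⟨((pivot_adj_left G a b x).mpr he.symm).symm, ?_⟩
        simp only [Sym2.mem_iff, not_or]
        exact ⟨fun hh => hxb hh.symm, (G.ne_of_adj hab).symm⟩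
  have h2 : {e ∈ G.edgeSet | a ∈ e}.ncard ≤ {e ∈ H.edgeSet | b ∉ e}.ncard + 1 := by
    calc {e ∈ G.edgeSet | a ∈ e}.ncard
        ≤ ({e ∈ G.edgeSet | a ∈ e} \ {s(a,b)}).ncard + ({s(a,b)} : Set (Sym2 V)).ncard :=
          Set.ncard_le_ncard_diff_add_ncard _ _
      _ ≤ {e ∈ H.edgeSet | b ∉ e}.ncard + 1 := by
          rw [Set.ncard_singleton]
          exact Nat.add_le_add_right (Set.ncard_le_ncard hsub (Set.toFinite _)) 1
  omega

theorem interlacePoly_eval_one_ge_size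
    (q : ∀ (V : Type) [Fintype V] [DecidableEq V], SimpleGraph V → Polynomial ℤ)
    (hq : IsInterlacePoly q)
    {V : Type} [Fintype V] [DecidableEq V] (G : SimpleGraph V) :
    (G.edgeSet.ncard : ℤ) + 1 ≤ (q V G).eval 1 := by
  obtain ⟨-, hrec, hbot⟩ := hq
  suffices h : ∀ n (V : Type) [Fintype V] [DecidableEq V] (G : SimpleGraph V),
      Fintype.card V ≤ n → (G.edgeSet.ncard : ℤ) + 1 ≤ (q V G).eval 1 by
    exact h (Fintype.card V) V G le_rfl
  intro n
  induction n with
  | zero =>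
    intro V _ _ G hcard
    have hbotG : G = ⊥ := by
      ext x y
      have : Fintype.card V = 0 := Nat.le_zero.mp hcard
      exact absurd (Fintype.card_pos_iff.mpr ⟨x⟩) (by omega)
    subst hbotG
    rw [hbot V]
    simp
  | succ n ih =>
    intro V _ _ G hcard
    by_cases hG : G = ⊥
    · subst hG
      rw [hbot V]
      simp
    · obtain ⟨e, he⟩ := (SimpleGraph.edgeSet_nonempty).mpr hG
      induction e with
      | h a b =>
        have hab : G.Adj a b := he
        have hcard' : ∀ c : V, Fintype.card {v : V // v ≠ c} ≤ n := by
          intro c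
          have hlt : Fintype.card {v : V // v ≠ c} < Fintype.card V :=
            Fintype.card_subtype_lt (x := c) (by simp)
          omega
        have h1 := ih {v : V // v ≠ a} (delVert G a) (hcard' a)
        have h2 := ih {v : V // v ≠ b} (delVert (pivot G a b) b) (hcard' b)
        have hcount := edge_count_ineq G hab
        rw [hrec V G a b hab, Polynomial.eval_add]
        have : (G.edgeSet.ncard : ℤ) ≤
            ((delVert G a).edgeSet.ncard : ℤ) +
            ((delVert (pivot G a b) b).edgeSet.ncard : ℤ) + 1 := by
          exact_mod_cast hcount
        linarith
end
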